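/- arXiv:1102.1294 — 4 statements merged into one kernel-verified Lean document; each statement's English description precedes it below -/
import Mathlib

section
/- Let C be a complex of abelian groups such that all cohomology groups of C are p-torsion and the cohomology of C ⊗^L ℤ/p vanishes in all nonzero degrees. Then H^1(C) is a p-divisible group and H^i(C) = 0 for all i ≠ 1. -/
/-! STATEMENT 3 -/

/-- A (cochain) complex of abelian groups indexed by `ℤ`. -/
structure Cplx : Type 1 where
  X : ℤ → Type
  inst : ∀ n, AddCommGroup (X n)
  d : ∀ n, X n →+ X (n + 1)
  dd : ∀ n (x : X n), d (n + 1) (d n x) = 0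

attribute [instance] Cplx.inst

namespace Cplx

/-- transport along an equality of degrees -/
def cast (C : Cplx) {m n : ℤ} (h : m = n) : C.X m ≃+ C.X n :=
  h ▸ AddEquiv.refl (C.X m)

/-- cocycles in degree `n` -/
def cocycles (C : Cplx) (n : ℤ) : AddSubgroup (C.X n) := (C.d n).ker

/-- coboundaries in degree `n` -/
def bdry (C : Cplx) (n : ℤ) : AddSubgroup (C.X n) :=
  (C.d (n - 1)).range.map (C.cast (show n - 1 + 1 = n by omega)).toAddMonoidHom

/-- the cohomology of `C` in degree `n` -/
def H (C : Cplx) (n : ℤ) : Type :=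
  ↥(C.cocycles n) ⧸ ((C.bdry n).addSubgroupOf (C.cocycles n))

instance (C : Cplx) (n : ℤ) : AddCommGroup (C.H n) := by
  unfold H; infer_instance

/-- morphisms of complexes -/
structure Hom (C D : Cplx) where
  f : ∀ n, C.X n →+ D.X n
  comm : ∀ n (x : C.X n), D.d n (f n x) = f (n + 1) (C.d n x)

theorem f_cast {C D : Cplx} (φ : Hom C D) {m n : ℤ} (h : m = n) (x : C.X m) :
    φ.f n (C.cast h x) = D.cast h (φ.f m x) := by subst h; rfl

/-- a morphism maps cocycles to cocycles… -/
def mapCocycles {C D : Cplx} (φ : Hom C D) (n : ℤ) : ↥(C.cocycles n) →+ ↥(D.cocycles n) :=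
  AddMonoidHom.codRestrict ((φ.f n).comp (C.cocycles n).subtype) _ (fun x => by
    have hx : C.d n (x : C.X n) = 0 := x.2
    show φ.f n (x : C.X n) ∈ (D.d n).ker
    rw [AddMonoidHom.mem_ker, φ.comm n, hx, map_zero])

/-- …hence induces a map on cohomology -/
def mapH {C D : Cplx} (φ : Hom C D) (n : ℤ) : C.H n →+ D.H n :=
  QuotientAddGroup.map _ _ (mapCocycles φ n) (by
    intro x hx
    rw [AddSubgroup.mem_comap]
    rw [AddSubgroup.mem_addSubgroupOf] at hx ⊢
    rcases hx with ⟨z, hz, hzx⟩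
    rcases hz with ⟨y, rfl⟩
    refine ⟨D.d (n - 1) (φ.f (n - 1) y), ⟨φ.f (n - 1) y, rfl⟩, ?_⟩
    show D.cast (show n - 1 + 1 = n by omega) (D.d (n - 1) (φ.f (n - 1) y))
        = ((mapCocycles φ n x : ↥(D.cocycles n)) : D.X n)
    rw [φ.comm (n - 1) y, ← f_cast φ _ (C.d (n - 1) y)]
    have hzx' : C.cast (show n - 1 + 1 = n by omega) (C.d (n - 1) y) = (x : C.X n) := hzx
    rw [hzx']
    rfl)

/-- quasi-isomorphisms -/
def qiso {C D : Cplx} (φ : Hom C D) : Prop := ∀ n, Function.Bijective (mapH φ n)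

/-- `C` and `D` are quasi-isomorphic (connected by a cospan of quasi-isomorphisms). -/
def QIso (C D : Cplx) : Prop :=
  ∃ (Z : Cplx) (f : Hom C Z) (g : Hom D Z), qiso f ∧ qiso g

end Cplx

namespace Statement3

open Cplx

variable (C : Cplx) (p : ℕ)

/-- the cone of multiplication by `k` on `C`; this is `C ⊗ Cₙ = C ⊗ Cone(k : ℤ → ℤ)` -/
def cone (k : ℤ) : Cplx where
  X m := C.X (m + 1) × C.X m
  inst m := by infer_instance
  d m := AddMonoidHom.mk'
    (fun (x : C.X (m + 1) × C.X m) => (C.d (m + 1) x.1, k • x.1 - C.d m x.2))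
    (by
      intro x y
      refine Prod.ext (by simp) ?_
      show k • (x.1 + y.1) - C.d m (x.2 + y.2) = _
      simp [smul_add, map_add]
      abel)
  dd m x := by
    refine Prod.ext ?_ ?_
    · exact C.dd (m + 1) x.1
    · show k • C.d (m + 1) x.1 - C.d (m + 1) (k • x.1 - C.d m x.2) = 0
      rw [map_sub, map_zsmul, C.dd m x.2]
      abel

/-! The cone of `k` fits into the long exact sequence
`Hⁿ(C) --k--> Hⁿ(C) → Hⁿ(Cone k) → Hⁿ⁺¹(C) --k--> Hⁿ⁺¹(C)`, so `Hⁿ(Cone k) = 0` makes `k`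
surjective on `Hⁿ(C)` and injective on `Hⁿ⁺¹(C)`. Since `Hⁿ(Cone p) = 0` for `n ≠ 0`, `p` is
injective on `Hⁿ(C)` for `n ≠ 1`, which kills the `p`-power torsion there, and `p` is surjective
on `H¹(C)`. -/

theorem _root_.Cplx.mem_bdry_add_one {D : Cplx} {m : ℤ} {x : D.X (m + 1)} :
    x ∈ D.bdry (m + 1) ↔ ∃ y : D.X m, D.d m y = x := by
  -- `m + 1 - 1` is not definitionally `m`, so the index is generalized before `cast` can reduce.
  have reindex : ∀ j (hj : j = m) (h : j + 1 = m + 1),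
      (∃ y : D.X j, D.cast h (D.d j y) = x) ↔ ∃ y : D.X m, D.d m y = x := by
    rintro j rfl h
    rfl
  rw [← reindex (m + 1 - 1) (by omega) (by omega), Cplx.bdry, AddSubgroup.mem_map]
  simp only [AddMonoidHom.mem_range, exists_exists_eq_and]
  rfl

theorem _root_.Cplx.H.mk_eq_zero_iff {D : Cplx} {n : ℤ} (z : D.cocycles n) :
    (QuotientAddGroup.mk z : D.H n) = 0 ↔ (z : D.X n) ∈ D.bdry n := by
  rw [QuotientAddGroup.eq_zero_iff, AddSubgroup.mem_addSubgroupOf]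

theorem _root_.Cplx.mem_bdry_of_subsingleton_H {D : Cplx} {n : ℤ} (hD : Subsingleton (D.H n))
    (z : D.cocycles n) : (z : D.X n) ∈ D.bdry n :=
  (Cplx.H.mk_eq_zero_iff z).mp (hD.elim _ _)

theorem mem_cone_cocycles_iff {k m : ℤ} {a : C.X (m + 1)} {b : C.X m} :
    ((a, b) : C.X (m + 1) × C.X m) ∈ (cone C k).cocycles m ↔
      C.d (m + 1) a = 0 ∧ C.d m b = k • a := by
  show (C.d (m + 1) a, k • a - C.d m b) = ((0, 0) : C.X (m + 1 + 1) × C.X (m + 1)) ↔ _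
  rw [Prod.mk.injEq, sub_eq_zero, eq_comm (a := k • a)]

theorem mem_cone_bdry_add_one_iff {k m : ℤ} {a : C.X (m + 1 + 1)} {b : C.X (m + 1)} :
    ((a, b) : C.X (m + 1 + 1) × C.X (m + 1)) ∈ (cone C k).bdry (m + 1) ↔
      ∃ (a' : C.X (m + 1)) (b' : C.X m), C.d (m + 1) a' = a ∧ k • a' - C.d m b' = b := by
  refine Cplx.mem_bdry_add_one.trans ⟨fun ⟨⟨a', b'⟩, h⟩ => ⟨a', b', Prod.ext_iff.mp h⟩,
    fun ⟨a', b', h₁, h₂⟩ => ⟨(a', b'), Prod.ext h₁ h₂⟩⟩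

theorem zsmul_surjective_H_of_subsingleton_cone_H (k n : ℤ)
    (hcone : Subsingleton ((cone C k).H n)) (y : C.H n) : ∃ x : C.H n, k • x = y := by
  obtain ⟨m, rfl⟩ : ∃ m, n = m + 1 := ⟨n - 1, by omega⟩
  obtain ⟨z, rfl⟩ := QuotientAddGroup.mk_surjective y
  have hcocycle := (mem_cone_cocycles_iff C (k := k) (a := 0) (b := (z : C.X (m + 1)))).mpr
    ⟨map_zero _, by rw [smul_zero]; exact z.2⟩
  obtain ⟨a, b, ha, hab⟩ := (mem_cone_bdry_add_one_iff C).mp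
    (Cplx.mem_bdry_of_subsingleton_H hcone ⟨_, hcocycle⟩)
  refine ⟨QuotientAddGroup.mk ⟨a, ha⟩, QuotientAddGroup.eq_iff_sub_mem.mpr ?_⟩
  rw [AddSubgroup.mem_addSubgroupOf, Cplx.mem_bdry_add_one]
  exact ⟨b, by simp [← hab]⟩

theorem zsmul_injective_H_of_subsingleton_cone_H (k m : ℤ)
    (hcone : Subsingleton ((cone C k).H m)) (x : C.H (m + 1)) (hx : k • x = 0) : x = 0 := by
  obtain ⟨l, rfl⟩ : ∃ l, m = l + 1 := ⟨m - 1, by omega⟩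
  obtain ⟨z, rfl⟩ := QuotientAddGroup.mk_surjective x
  obtain ⟨w, hw⟩ := Cplx.mem_bdry_add_one.mp ((Cplx.H.mk_eq_zero_iff (k • z)).mp hx)
  have hcocycle := (mem_cone_cocycles_iff C).mpr ⟨z.2, hw⟩
  obtain ⟨a, -, ha, -⟩ := (mem_cone_bdry_add_one_iff C).mp
    (Cplx.mem_bdry_of_subsingleton_H hcone ⟨_, hcocycle⟩)
  exact (Cplx.H.mk_eq_zero_iff z).mpr (Cplx.mem_bdry_add_one.mpr ⟨a, ha⟩)

theorem eq_zero_of_zsmul_pow_eq_zero {A : Type*} [AddCommGroup A] {k : ℤ}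
    (hk : ∀ x : A, k • x = 0 → x = 0) {x : A} {j : ℕ} (hx : k ^ j • x = 0) : x = 0 := by
  induction j generalizing x with
  | zero => simpa using hx
  | succ j ih => exact hk x (ih (by rwa [← mul_smul, ← pow_succ]))

theorem statement3
    -- the cohomology of C is p-torsion
    (htors : ∀ (n : ℤ) (x : C.H n), ∃ k : ℕ, ((p : ℤ) ^ k) • x = 0)
    -- C ⊗^L ℤ/p is acyclic in nonzero degrees
    (hacyc : ∀ n : ℤ, n ≠ 0 → Subsingleton ((cone C (p : ℤ)).H n)) :
    -- H¹(C) is p-divisible and Hⁱ(C) = 0 for i ≠ 1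
    (∀ y : C.H 1, ∃ x : C.H 1, (p : ℤ) • x = y) ∧
    (∀ n : ℤ, n ≠ 1 → Subsingleton (C.H n)) := by
  refine ⟨fun y => ?_, fun n hn => ?_⟩
  · exact zsmul_surjective_H_of_subsingleton_cone_H C p 1 (hacyc 1 one_ne_zero) y
  · obtain ⟨m, rfl⟩ : ∃ m, n = m + 1 := ⟨n - 1, by omega⟩
    refine subsingleton_of_forall_eq 0 fun x => ?_
    obtain ⟨j, hj⟩ := htors (m + 1) x
    exact eq_zero_of_zsmul_pow_eq_zero
      (zsmul_injective_H_of_subsingleton_cone_H C p m (hacyc m (by omega))) hj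

end Statement3
end

section
/- Let 𝒱 be an essentially small site, ℬ an essentially small category, and φ : ℬ → 𝒱 a faithful functor satisfying: for every V ∈ 𝒱 and every finite family of pairs (B_α, f_α) with B_α ∈ ℬ and f_α : V → φ(B_α), there exist objects B'_β ∈ ℬ and a covering family {φ(B'_β) → V} such that every composite φ(B'_β) → V → φ(B_α) is in the image of Hom(B'_β, B_α) → Hom(φ(B'_β), φ(B_α)). Define a sieve in ℬ to be covering if its φ-image is a covering family in 𝒱. Then these covering sieves form a Grothendieck topology on ℬ. -/
/-!
Only pullback stability needs condition (*). If `h : W ⟶ φ b'` and `f : b' ⟶ b` satisfy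
`h ≫ φ f = u ≫ φ g` with `g ∈ S`, apply (*) to the pair `h, u`: on a covering family
`φ B'_β ⟶ W` both composites lift to `ℬ`, and faithfulness turns the equality of their images
into `h_β ≫ f = u_β ≫ g ∈ S`. So `h` is locally in the image of `S.pullback f`.
-/

open CategoryTheory

namespace CategoryTheory.Sieve

variable {B V : Type*} [Category B] [Category V] (φ : B ⥤ V) (J : GrothendieckTopology V)

theorem functorPushforward_mem_of_pullback_mem {b : B} {S R : Sieve b}
    (hS : S.functorPushforward φ ∈ J (φ.obj b))
    (hR : ∀ ⦃Y : B⦄ ⦃g : Y ⟶ b⦄, S g → (R.pullback g).functorPushforward φ ∈ J (φ.obj Y)) :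
    R.functorPushforward φ ∈ J (φ.obj b) := by
  refine J.transitive hS _ ?_
  rintro W _ ⟨Y, g, u, hg, rfl⟩
  rw [pullback_comp]
  exact J.superset_covering (pullback_monotone u (functorPushforward_pullback_le φ g R))
    (J.pullback_stable u (hR hg))

/-- Condition (*) of the statement, for families of two arrows. -/
def LiftsLocallyPairs : Prop :=
  ∀ (W : V) (B₁ B₂ : B) (f₁ : W ⟶ φ.obj B₁) (f₂ : W ⟶ φ.obj B₂),
    ∃ (κ : Type) (B' : κ → B) (g : ∀ β, φ.obj (B' β) ⟶ W),
      ofArrows (fun β => φ.obj (B' β)) g ∈ J W ∧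
      ∀ β, (∃ h₁ : B' β ⟶ B₁, φ.map h₁ = g β ≫ f₁) ∧ ∃ h₂ : B' β ⟶ B₂, φ.map h₂ = g β ≫ f₂

theorem liftsLocallyPairs_of_finite
    (hφ : ∀ (W : V) (ι : Type) (_ : Finite ι) (Bo : ι → B) (f : ∀ α, W ⟶ φ.obj (Bo α)),
      ∃ (κ : Type) (B' : κ → B) (g : ∀ β, φ.obj (B' β) ⟶ W),
        ofArrows (fun β => φ.obj (B' β)) g ∈ J W ∧
        ∀ β α, ∃ h : B' β ⟶ Bo α, φ.map h = g β ≫ f α) :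
    LiftsLocallyPairs φ J := by
  intro W B₁ B₂ f₁ f₂
  obtain ⟨κ, B', g, hcov, hlift⟩ :=
    hφ W Bool inferInstance (fun i => cond i B₁ B₂) fun | true => f₁ | false => f₂
  exact ⟨κ, B', g, hcov, fun β => ⟨hlift β true, hlift β false⟩⟩

theorem functorPushforward_pullback_mem [φ.Faithful] (hφ : LiftsLocallyPairs φ J)
    {b b' : B} {S : Sieve b} (hS : S.functorPushforward φ ∈ J (φ.obj b)) (f : b' ⟶ b) :
    (S.pullback f).functorPushforward φ ∈ J (φ.obj b') := by
  refine J.transitive (J.pullback_stable (φ.map f) hS) _ ?_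
  rintro W h ⟨Y, g, u, hg, hfac⟩
  obtain ⟨κ, B', k, hcov, hlift⟩ := hφ W b' Y h u
  refine J.superset_covering ?_ hcov
  rw [ofArrows, generate_le_iff, Presieve.ofArrows_le_iff]
  intro β
  obtain ⟨⟨hβ, hhβ⟩, ⟨uβ, huβ⟩⟩ := hlift β
  have hcomm : hβ ≫ f = uβ ≫ g :=
    φ.map_injective (by simp only [Functor.map_comp, hhβ, huβ, Category.assoc, hfac])
  exact ⟨B' β, hβ, 𝟙 _, by simpa [hcomm] using S.downward_closed hg uβ, by simp [hhβ]⟩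

def functorPushforwardTopology [φ.Faithful] (hφ : LiftsLocallyPairs φ J) :
    GrothendieckTopology B where
  sieves b := {S | S.functorPushforward φ ∈ J (φ.obj b)}
  top_mem' b := by simp only [Set.mem_ofPred_eq, functorPushforward_top, J.top_mem]
  pullback_stable' _ _ _ f hS := functorPushforward_pullback_mem φ J hφ hS f
  transitive' _ _ hS _ hR := functorPushforward_mem_of_pullback_mem φ J hS hR

end CategoryTheory.Sieve

theorem statement11 {B V : Type} [SmallCategory B] [SmallCategory V]
    (φ : B ⥤ V) (hfaithful : φ.Faithful)
    (J : GrothendieckTopology V)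
    -- condition (*)
    (hstar : ∀ (W : V) (ι : Type) (_ : Finite ι) (Bo : ι → B) (f : ∀ α, W ⟶ φ.obj (Bo α)),
      ∃ (κ : Type) (B' : κ → B) (g : ∀ β, φ.obj (B' β) ⟶ W),
        Sieve.ofArrows (fun β => φ.obj (B' β)) g ∈ J W ∧
        ∀ β α, ∃ h : B' β ⟶ Bo α, φ.map h = g β ≫ f α) :
    -- the covering sieves of ℬ form a Grothendieck topology
    ∃ K : GrothendieckTopology B,
      ∀ (b : B) (S : Sieve b), S ∈ K b ↔ S.functorPushforward φ ∈ J (φ.obj b) :=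
  ⟨Sieve.functorPushforwardTopology φ J (Sieve.liftsLocallyPairs_of_finite φ J hstar),
    fun _ _ => Iff.rfl⟩
end

section
/- Let 𝒱 be an essentially small site and (ℬ, φ) a base for 𝒱 (φ : ℬ → 𝒱 faithful satisfying condition (*) as in the definition of a base). Equip ℬ with the φ-induced topology. Then the functor φ induces an equivalence between the topos of sheaves of sets on ℬ and the topos of sheaves of sets on 𝒱. -/
/-!
Condition (*) applied to the empty family says that every object of `𝒱` is covered by objects
of the form `φ B`, i.e. `φ` is cover dense; applied to the pair `(𝟙, f)` for
`f : φ U ⟶ φ U'` it says that `f` lifts to `ℬ` locally on `φ U`, i.e. `φ` is locally full.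
Together with faithfulness and the definition of the induced topology this makes `φ` a dense
subsite, and the comparison lemma says that restriction of sheaves along a dense subsite is an
equivalence.
-/

open CategoryTheory

namespace CategoryTheory.Functor

variable {C D : Type*} [Category C] [Category D] (G : C ⥤ D) (K : GrothendieckTopology D)

lemma isCoverDense_of_ofArrows_mem
    (h : ∀ W : D, ∃ (ι : Type*) (X : ι → C) (g : ∀ i, G.obj (X i) ⟶ W),
      Sieve.ofArrows (fun i => G.obj (X i)) g ∈ K W) :
    G.IsCoverDense K where
  is_cover W := by
    obtain ⟨ι, X, g, hg⟩ := h W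
    refine K.superset_covering ?_ hg
    rintro Y _ ⟨Z, a, b, ⟨i⟩, rfl⟩
    exact ⟨⟨X i, a, g i, rfl⟩⟩

lemma isLocallyFull_of_ofArrows_mem
    (h : ∀ {U U' : C} (f : G.obj U ⟶ G.obj U'), ∃ (ι : Type*) (X : ι → C) (g : ∀ i, X i ⟶ U),
      Sieve.ofArrows (fun i => G.obj (X i)) (fun i => G.map (g i)) ∈ K (G.obj U) ∧
      ∀ i, ∃ l : X i ⟶ U', G.map l = G.map (g i) ≫ f) :
    G.IsLocallyFull K where
  functorPushforward_imageSieve_mem {U U'} f := by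
    obtain ⟨ι, X, g, hg, hlift⟩ := h f
    refine K.superset_covering ?_ hg
    rintro Y _ ⟨Z, a, b, ⟨i⟩, rfl⟩
    exact ⟨X i, g i, a, hlift i, rfl⟩

end CategoryTheory.Functor

theorem statement12 {B V : Type} [SmallCategory B] [SmallCategory V]
    (φ : B ⥤ V) (hfaithful : φ.Faithful)
    (J : GrothendieckTopology V)
    -- condition (*)
    (hstar : ∀ (W : V) (ι : Type) (_ : Finite ι) (Bo : ι → B) (f : ∀ α, W ⟶ φ.obj (Bo α)),
      ∃ (κ : Type) (B' : κ → B) (g : ∀ β, φ.obj (B' β) ⟶ W),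
        Sieve.ofArrows (fun β => φ.obj (B' β)) g ∈ J W ∧
        ∀ β α, ∃ h : B' β ⟶ Bo α, φ.map h = g β ≫ f α)
    -- K is the φ-induced topology on ℬ
    (K : GrothendieckTopology B)
    (hK : ∀ (b : B) (S : Sieve b), S ∈ K b ↔ S.functorPushforward φ ∈ J (φ.obj b)) :
    -- the pushforward functor φ_s (composition with φ.op on underlying presheaves)
    -- is an equivalence of toposes Sheaf J (Type) ≌ Sheaf K (Type)
    ∃ F : Sheaf J (Type) ⥤ Sheaf K (Type),
      (∀ G : Sheaf J (Type), (F.obj G).val = φ.op ⋙ G.val) ∧ F.IsEquivalence := by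
  have hcd : φ.IsCoverDense J := φ.isCoverDense_of_ofArrows_mem J fun W => by
    obtain ⟨κ, B', g, hg, -⟩ := hstar W PEmpty inferInstance PEmpty.elim (fun α => α.elim)
    exact ⟨κ, B', g, hg⟩
  have hlf : φ.IsLocallyFull J := φ.isLocallyFull_of_ofArrows_mem J fun {U U'} f => by
    obtain ⟨κ, B', g, hg, hlift⟩ := hstar (φ.obj U) Bool inferInstance
      (fun b => bif b then U else U') (fun | true => 𝟙 _ | false => f)
    choose g' hg' using fun β => hlift β true
    simp only [Category.comp_id] at hg'
    obtain rfl : (fun β => φ.map (g' β)) = g := funext hg'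
    exact ⟨κ, B', g', hg, fun β => hlift β false⟩
  have : φ.IsDenseSubsite K J := { functorPushforward_mem_iff := (hK _ _).symm }
  exact ⟨φ.sheafPushforwardContinuous Type K J, fun _ => rfl, inferInstance⟩
end

section
/- Let M_{A,B} be the commutative monoid given as the quotient of ℕ[A ⊔ B] ⊕ ℕ (with A, B finite sets, A nonempty, and distinguished generator m_π of the last factor) by the relation ∏_{a∈A} m_a = m_π^e for a positive integer e. Then the monoid homomorphism M_{A,B} → e^{-1}ℕ[A] ⊕ ℕ[B] sending m_a ↦ m_a, m_b ↦ m_b, m_π ↦ ∏_a m_a^{1/e} is injective, its image consists of the elements ∏ m_a^{n_a/e}·∏ m_b^{n_b} with n_a, n_b ∈ ℕ such that n_a − n_{a'} ∈ eℤ for all a, a' ∈ A, and consequently M_{A,B} is an integral saturated (fs) monoid. -/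
/-!
STATEMENT 16: Let `M_{A,B}` be the commutative monoid (written additively here) given as the
quotient of `ℕ[A ⊔ B] ⊕ ℕ` (free commutative monoid on `A ⊔ B` plus a distinguished generator
`m_π`) by the relation `∑_{a ∈ A} m_a = e • m_π`, for finite sets `A ≠ ∅`, `B` and `e ≥ 1`.
The monoid homomorphism `ψ : M_{A,B} → e⁻¹ℕ[A] ⊕ ℕ[B]` sending `m_a ↦ m_a`, `m_b ↦ m_b` and
`m_π ↦ ∏_a m_a^{1/e}` is injective; its image consists of the `∏ m_a^{n_a/e}·∏ m_b^{n_b}` with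
`n_a ≡ n_{a'} (mod e)` for all `a, a' ∈ A`; consequently `M_{A,B}` is integral (cancellative)
and saturated.

Encoding: `e⁻¹ℕ[A]` is identified with `A →₀ ℕ` by measuring exponents in units of `1/e`,
so `ψ(m_a) = e • single a 1`, `ψ(m_π) = ∑_a single a 1`.
-/

open Finsupp

variable (A B : Type) [Fintype A] [Nonempty A] [Fintype B] [DecidableEq A] [DecidableEq B]
  (e : ℕ)

/-- the free commutative monoid `ℕ[A ⊔ B] ⊕ ℕ` -/
abbrev FreeMon := ((A ⊕ B) →₀ ℕ) × ℕ

/-- the defining relation `∑_a m_a = e • m_π` -/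
def rel : FreeMon A B → FreeMon A B → Prop := fun x y =>
  x = (∑ a : A, Finsupp.single (Sum.inl a) 1, 0) ∧ y = (0, e)

/-- the monoid `M_{A,B}` -/
abbrev MAB := (addConGen (rel A B e)).Quotient

/-- the target monoid `e⁻¹ℕ[A] ⊕ ℕ[B]`, with the `A`-exponents in units of `1/e` -/
abbrev Tgt := (A →₀ ℕ) × (B →₀ ℕ)

/-- the underlying homomorphism `ℕ[A ⊔ B] ⊕ ℕ → e⁻¹ℕ[A] ⊕ ℕ[B]`,
`m_a ↦ m_a = e·(m_a^{1/e})`, `m_b ↦ m_b`, `m_π ↦ ∑_a m_a^{1/e}` -/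
noncomputable def smulSumHom : ℕ →+ (A →₀ ℕ) where
  toFun k := k • (∑ a : A, Finsupp.single a 1)
  map_zero' := zero_smul _ _
  map_add' a b := add_smul a b _

noncomputable def eMulHom : (A →₀ ℕ) →+ (A →₀ ℕ) where
  toFun x := e • x
  map_zero' := smul_zero _
  map_add' x y := smul_add _ _ _

noncomputable def baseHom : FreeMon A B →+ Tgt A B :=
  AddMonoidHom.prod
    ((eMulHom A e).comp ((comapDomain.addMonoidHom Sum.inl_injective).comp
        (AddMonoidHom.fst _ _)) +
      (smulSumHom A).comp (AddMonoidHom.snd _ _))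
    ((comapDomain.addMonoidHom Sum.inr_injective).comp (AddMonoidHom.fst _ _))

lemma baseHom_rel : baseHom A B e (∑ a : A, Finsupp.single (Sum.inl a) 1, 0)
    = baseHom A B e ((0 : (A ⊕ B) →₀ ℕ), e) := by
  have h1 : comapDomain.addMonoidHom (M := ℕ) Sum.inl_injective
      (∑ a : A, Finsupp.single (Sum.inl a : A ⊕ B) (1 : ℕ)) = ∑ a : A, Finsupp.single a 1 := by
    rw [map_sum]
    refine Finset.sum_congr rfl fun a _ => ?_
    ext a'
    simp [comapDomain.addMonoidHom, Finsupp.comapDomain_apply, Finsupp.single_apply,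
      Sum.inl.injEq]
  have h2 : comapDomain.addMonoidHom (M := ℕ) Sum.inr_injective
      (∑ a : A, Finsupp.single (Sum.inl a : A ⊕ B) (1 : ℕ)) = 0 := by
    rw [map_sum]
    refine Finset.sum_eq_zero fun a _ => ?_
    ext b
    simp [comapDomain.addMonoidHom, Finsupp.comapDomain_apply, Finsupp.single_apply]
  simp [baseHom, eMulHom, smulSumHom, h1, h2]

/-- the induced homomorphism `ψ : M_{A,B} → e⁻¹ℕ[A] ⊕ ℕ[B]` -/
noncomputable def ψ : MAB A B e →+ Tgt A B :=
  AddCon.lift _ (baseHom A B e) (by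
    refine AddCon.addConGen_le.mpr ?_
    rintro x y ⟨rfl, rfl⟩
    exact baseHom_rel A B e)

/-!
Modulo the relation, every element of `M_{A,B}` is represented by a pair `(f, k)` with
`k < e`, and `ψ(f, k)` has `A`-coordinates `e * f a + k`; division with remainder by `e` recovers
`f` and `k`, which gives injectivity and the description of the image. The target is a free
commutative monoid, hence cancellative and saturated, and `M_{A,B}` inherits both because its image
is closed under differences: if `q` and `q + u` have all `A`-coordinates congruent mod `e`, so
does `u`.
-/

section

variable {A B e}

omit [Nonempty A] [Fintype B] [DecidableEq A] [DecidableEq B] in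
lemma addConGen_rel_add_nsmul (f : (A ⊕ B) →₀ ℕ) (k d : ℕ) :
    addConGen (rel A B e) (f + d • ∑ a : A, single (Sum.inl a) 1, k) (f, k + d * e) := by
  have hrel : addConGen (rel A B e) (∑ a : A, single (Sum.inl a) 1, 0) (0, e) :=
    AddConGen.Rel.of _ _ ⟨rfl, rfl⟩
  simpa [mul_comm] using (addConGen (rel A B e)).add (AddCon.refl _ (f, k)) (AddCon.nsmul _ d hrel)

omit [Nonempty A] [Fintype B] [DecidableEq A] [DecidableEq B] in
lemma MAB.exists_eq_mk_of_lt (he : 1 ≤ e) (m : MAB A B e) :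
    ∃ (f : (A ⊕ B) →₀ ℕ) (k : ℕ), k < e ∧ m = ((f, k) : FreeMon A B) := by
  induction m using AddCon.induction_on with
  | H x =>
    obtain ⟨f, k⟩ := x
    refine ⟨f + (k / e) • ∑ a : A, single (Sum.inl a) 1, k % e, Nat.mod_lt k he, ?_⟩
    have hrel := addConGen_rel_add_nsmul (e := e) f (k % e) (k / e)
    rw [Nat.mod_add_div'] at hrel
    exact (AddCon.eq _).mpr (AddCon.symm _ hrel)

omit [Nonempty A] [Fintype B] [DecidableEq B] in
lemma baseHom_fst_apply (f : (A ⊕ B) →₀ ℕ) (k : ℕ) (a : A) :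
    (baseHom A B e (f, k)).1 a = e * f (Sum.inl a) + k := by
  simp [baseHom, eMulHom, smulSumHom, comapDomain.addMonoidHom, Finsupp.single_apply]

omit [Nonempty A] [Fintype B] [DecidableEq A] [DecidableEq B] in
lemma baseHom_snd_apply (f : (A ⊕ B) →₀ ℕ) (k : ℕ) (b : B) :
    (baseHom A B e (f, k)).2 b = f (Sum.inr b) := by
  simp [baseHom, comapDomain.addMonoidHom]

lemma ψ_mk (x : FreeMon A B) : ψ A B e x = baseHom A B e x := rfl

omit [Fintype B] [DecidableEq B] in
lemma eq_of_baseHom_eq_of_lt (he : 1 ≤ e) {f f' : (A ⊕ B) →₀ ℕ} {k k' : ℕ} (hk : k < e) (hk' : k' < e)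
    (h : baseHom A B e (f, k) = baseHom A B e (f', k')) : f = f' ∧ k = k' := by
  have hA (a : A) : e * f (Sum.inl a) + k = e * f' (Sum.inl a) + k' := by
    simpa only [baseHom_fst_apply] using congrArg (fun x : Tgt A B => x.1 a) h
  have hB (b : B) : f (Sum.inr b) = f' (Sum.inr b) := by
    simpa only [baseHom_snd_apply] using congrArg (fun x : Tgt A B => x.2 b) h
  -- both sides are the quotient and remainder of the same division by `e`
  have hdiv (g : (A ⊕ B) →₀ ℕ) (j : ℕ) (hj : j < e) (a : A) :
      (e * g (Sum.inl a) + j) / e = g (Sum.inl a) ∧ (e * g (Sum.inl a) + j) % e = j :=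
    (Nat.div_mod_unique he).mpr ⟨add_comm _ _, hj⟩
  obtain ⟨a₀⟩ := ‹Nonempty A›
  have hkk' : k = k' := by rw [← (hdiv f k hk a₀).2, hA, (hdiv f' k' hk' a₀).2]
  refine ⟨Finsupp.ext fun x => ?_, hkk'⟩
  rcases x with a | b
  · rw [← (hdiv f k hk a).1, hA, (hdiv f' k' hk' a).1]
  · exact hB b

lemma ψ_injective (he : 1 ≤ e) : Function.Injective (ψ A B e) := by
  intro x y hxy
  obtain ⟨f, k, hk, rfl⟩ := MAB.exists_eq_mk_of_lt he x
  obtain ⟨f', k', hk', rfl⟩ := MAB.exists_eq_mk_of_lt he y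
  obtain ⟨rfl, rfl⟩ := eq_of_baseHom_eq_of_lt he hk hk' hxy
  rfl

lemma ψ_range :
    Set.range (ψ A B e) = {x : Tgt A B | ∀ a a' : A, x.1 a % e = x.1 a' % e} := by
  ext x
  constructor
  · rintro ⟨m, rfl⟩
    induction m using AddCon.induction_on with
    | H x =>
      obtain ⟨f, k⟩ := x
      intro a a'
      simp [ψ_mk, baseHom_fst_apply]
  · obtain ⟨g, h⟩ := x
    intro hg
    obtain ⟨a₀⟩ := ‹Nonempty A›
    refine ⟨((equivFunOnFinite.symm (Sum.elim (fun a => g a / e) h), g a₀ % e) : FreeMon A B), ?_⟩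
    refine Prod.ext (Finsupp.ext fun a => ?_) (Finsupp.ext fun b => ?_)
    · simp [ψ_mk, baseHom_fst_apply, ← hg a a₀, Nat.div_add_mod]
    · simp [ψ_mk, baseHom_snd_apply]

lemma mem_range_ψ_of_add {q u : Tgt A B} (hq : q ∈ Set.range (ψ A B e))
    (hqu : q + u ∈ Set.range (ψ A B e)) : u ∈ Set.range (ψ A B e) := by
  rw [ψ_range] at hq hqu ⊢
  exact fun a a' => Nat.ModEq.add_left_cancel (hq a a') (hqu a a')

lemma MAB.exists_add_of_nsmul_eq (he : 1 ≤ e) {x y w : MAB A B e} {k : ℕ} (hk : 0 < k)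
    (hw : k • x = k • y + w) : ∃ u, x = y + u := by
  have hle : ψ A B e y ≤ ψ A B e x := by
    refine (smul_le_smul_iff_of_pos_left hk).mp ?_
    rw [← map_nsmul, ← map_nsmul, hw, map_add]
    exact le_self_add
  obtain ⟨u, hu⟩ := exists_add_of_le hle
  obtain ⟨u', rfl⟩ := mem_range_ψ_of_add (u := u) ⟨y, rfl⟩ (hu ▸ Set.mem_range_self x)
  exact ⟨u', ψ_injective he (by rw [map_add, hu])⟩

end

theorem statement16 (he : 1 ≤ e) :
    -- injectivity of ψ
    Function.Injective (ψ A B e) ∧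
    -- image description: all `A`-exponents congruent mod `e`
    Set.range (ψ A B e) = {x : Tgt A B | ∀ a a' : A, x.1 a % e = x.1 a' % e} ∧
    -- `M_{A,B}` is integral (cancellative) …
    (∀ x y z : MAB A B e, x + y = x + z → y = z) ∧
    -- … and saturated
    (∀ (x y : MAB A B e) (k : ℕ), 0 < k → (∃ w, k • x = k • y + w) → ∃ u, x = y + u) := by
  refine ⟨ψ_injective he, ψ_range, fun x y z h => ψ_injective he ?_,
    fun x y k hk ⟨w, hw⟩ => MAB.exists_add_of_nsmul_eq he hk hw⟩
  exact add_left_cancel (by rw [← map_add, ← map_add, h])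
end
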